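/- arXiv:2001.09515 — 2 statements merged into one kernel-verified Lean document; each statement's English description precedes it below -/
import Mathlib

section
/- Let S = [[i,0],[0,1]] and let W be the 4×4 matrix with all entries 1/2 except the diagonal entries, which are −1/2. Then S and W are unitary, and the basis {(S⊗W)|φ_{p,q}⟩: p∈{0,1}, q∈{0,1,2,3}} of C²⊗C⁴ is mutually unbiased with the basis {|φ_{n,m}⟩}: |⟨φ_{n,m}|(S⊗W)|φ_{p,q}⟩| = 1/(2√2) for all n,p∈{0,1}, m,q∈{0,1,2,3}. -/
open scoped Kronecker

noncomputable def phi (d : ℕ) (n : Fin 2) (m : Fin d) : EuclideanSpace ℂ (Fin 2 × Fin d) :=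
  WithLp.toLp 2 fun p =>
    (Real.sqrt 2 : ℂ)⁻¹ * (-1 : ℂ) ^ ((n : ℕ) * (p.1 : ℕ)) *
      (if (p.2 : ℕ) = (if (m : ℕ) = d - 1 then d - 1 else ((m : ℕ) + (p.1 : ℕ)) % (d - 1))
        then 1 else 0)

noncomputable def psi (d : ℕ) (S : Matrix (Fin 2) (Fin 2) ℂ) (W : Matrix (Fin d) (Fin d) ℂ)
    (n : Fin 2) (m : Fin d) : EuclideanSpace ℂ (Fin 2 × Fin d) :=
  WithLp.toLp 2 ((S ⊗ₖ W).mulVec (phi d n m))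

noncomputable def S₁ : Matrix (Fin 2) (Fin 2) ℂ := !![Complex.I, 0; 0, 1]

/-- `W` has all entries `1/2` except diagonal entries `-1/2`. -/
noncomputable def W₁ : Matrix (Fin 4) (Fin 4) ℂ :=
  Matrix.of fun s t => if s = t then (-(1 : ℂ)) / 2 else (1 : ℂ) / 2

lemma norm_helper (z : ℂ) (h : Complex.normSq z = 1/8) : ‖z‖ = 1/(2*Real.sqrt 2) := by
  rw [Complex.norm_def, h]
  rw [show (1:ℝ)/8 = (1/(2*Real.sqrt 2))^2 by
    field_simp
    rw [Real.sq_sqrt (by norm_num : (2:ℝ) ≥ 0)]; norm_num]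
  exact Real.sqrt_sq (by positivity)

lemma sqrt2_pow4 : (Real.sqrt 2) ^ 4 = 4 := by
  rw [show (4:ℕ) = 2*2 from rfl, pow_mul, Real.sq_sqrt (by norm_num : (0:ℝ) ≤ 2)]
  norm_num

set_option maxHeartbeats 12000000 in
/-- Example 1: `S = [[i,0],[0,1]]` and `W` with off-diagonal entries `1/2` and diagonal
entries `-1/2` are unitary, and the bases `{|φ_{n,m}⟩}` and `{(S⊗W)|φ_{p,q}⟩}` of `C²⊗C⁴` are
mutually unbiased. -/
theorem example1_mub :
    S₁ ∈ Matrix.unitaryGroup (Fin 2) ℂ ∧ W₁ ∈ Matrix.unitaryGroup (Fin 4) ℂ ∧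
    ∀ (n p : Fin 2) (m q : Fin 4),
      ‖(inner ℂ (phi 4 n m) (psi 4 S₁ W₁ p q) : ℂ)‖ = 1 / (2 * Real.sqrt 2) := by
  refine ⟨?_, ?_, ?_⟩
  · rw [Matrix.mem_unitaryGroup_iff]
    ext i j
    fin_cases i <;> fin_cases j <;>
      simp [S₁, Matrix.mul_apply, Fin.sum_univ_succ, Matrix.star_apply, Matrix.one_apply]
  · have hW : star W₁ = W₁ := by
      ext i j
      simp only [Matrix.star_apply, W₁, Matrix.of_apply]
      rcases eq_or_ne i j with h | h
      · simp [h]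
      · simp [h, Ne.symm h, ← Complex.ofReal_one, ← Complex.ofReal_div, Complex.conj_ofReal]
    rw [Matrix.mem_unitaryGroup_iff, hW]
    ext i j
    fin_cases i <;> fin_cases j <;>
      · simp (config := { decide := true }) [W₁, Matrix.mul_apply, Fin.sum_univ_four,
          Matrix.one_apply]
        try ring
  · intro n p m q
    apply norm_helper
    fin_cases n <;> fin_cases p <;> fin_cases m <;> fin_cases q <;>
      · simp (config := { decide := true }) [phi, psi, S₁, W₁, PiLp.inner_apply,
          RCLike.inner_apply, Matrix.mulVec, Matrix.kroneckerMap_apply, dotProduct,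
          Fintype.sum_prod_type, Fin.sum_univ_four, Fin.sum_univ_two, Complex.normSq_apply,
          ← Complex.ofReal_inv, ← Real.sqrt_inv]
        ring_nf
        norm_num [Real.sq_sqrt, sqrt2_pow4]
end

section
/- For every integer d ≥ 3, the 2d×2d matrix F whose columns, with respect to the ordered computational basis |00'⟩,…,|0(d−1)'⟩,|10'⟩,…,|1(d−1)'⟩ of C²⊗C^d, are the vectors |φ_{0,0}⟩,…,|φ_{0,d−1}⟩,|φ_{1,0}⟩,…,|φ_{1,d−1}⟩, is unitary: F†F = I_{2d}. -/
/-- The `2d × 2d` matrix whose columns (with respect to the computational product basis of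
`C² ⊗ C^d ≅ C^{2d}`) are the vectors `|φ_{n,m}⟩`. -/
noncomputable def Fmat (d : ℕ) : Matrix (Fin 2 × Fin d) (Fin 2 × Fin d) ℂ :=
  Matrix.of fun p nm => phi d nm.1 nm.2 p

lemma sum_delta (d x y : ℕ) (hx : x < d) :
    ∑ b : Fin d, (if (b:ℕ) = x then (1:ℂ) else 0) * (if (b:ℕ) = y then 1 else 0)
      = if x = y then 1 else 0 := by
  rw [Finset.sum_eq_single (⟨x, hx⟩ : Fin d)]
  · by_cases h : x = y <;> simp [h]
  · intro b _ hb
    have : (b : ℕ) ≠ x := fun h => hb (Fin.ext h)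
    simp [this]
  · simp

lemma hne_aux (d : ℕ) (hd : 3 ≤ d) (m m' : Fin d) (hm : m ≠ m') (a : ℕ) (_ : a ≤ 1) :
    (if (m:ℕ) = d - 1 then d - 1 else ((m:ℕ) + a) % (d - 1)) ≠
      (if (m':ℕ) = d - 1 then d - 1 else ((m':ℕ) + a) % (d - 1)) := by
  have hd1 : 0 < d - 1 := by omega
  have hmlt := m.isLt
  have hm'lt := m'.isLt
  split_ifs with h1 h2 h2
  · exact fun _ => hm (Fin.ext (h1.trans h2.symm))
  · have := Nat.mod_lt ((m':ℕ) + a) hd1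
    omega
  · have := Nat.mod_lt ((m:ℕ) + a) hd1
    omega
  · intro heq
    have h3 : (m:ℕ) % (d-1) = (m':ℕ) % (d-1) := by
      have : ((m:ℕ) + a) ≡ ((m':ℕ) + a) [MOD d-1] := heq
      exact (Nat.ModEq.add_right_cancel' a this)
    rw [Nat.mod_eq_of_lt (by omega), Nat.mod_eq_of_lt (by omega)] at h3
    exact hm (Fin.ext h3)

/-- For every `d ≥ 3`, the matrix `F` with columns `|φ_{n,m}⟩` is unitary: `F†F = I_{2d}`. -/
theorem Fmat_unitary (d : ℕ) (hd : 3 ≤ d) :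
    (Fmat d).conjTranspose * Fmat d = 1 := by
  have hd1 : 0 < d - 1 := by omega
  ext ⟨n, m⟩ ⟨n', m'⟩
  rw [Matrix.mul_apply, Matrix.one_apply]
  -- abbreviation for column index function
  set f : Fin d → ℕ → ℕ :=
    fun μ a => if (μ:ℕ) = d - 1 then d - 1 else ((μ:ℕ) + a) % (d - 1) with hf
  have hflt : ∀ (μ : Fin d) (a : ℕ), f μ a < d := by
    intro μ a
    simp only [hf]
    split_ifs
    · omega
    · have := Nat.mod_lt ((μ:ℕ) + a) hd1
      omega
  have hsum : ∀ a : Fin 2, ∑ b : Fin d,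
      (starRingEnd ℂ) (phi d n m (a, b)) * phi d n' m' (a, b)
        = (2:ℂ)⁻¹ * ((-1)^((n:ℕ)*(a:ℕ)) * (-1)^((n':ℕ)*(a:ℕ))) *
            (if f m (a:ℕ) = f m' (a:ℕ) then 1 else 0) := by
    intro a
    have h2 : ((Real.sqrt 2 : ℂ))⁻¹ * ((Real.sqrt 2 : ℂ))⁻¹ = (2:ℂ)⁻¹ := by
      rw [← mul_inv]
      norm_num [← Complex.ofReal_mul, Real.mul_self_sqrt]
    calc ∑ b : Fin d, (starRingEnd ℂ) (phi d n m (a, b)) * phi d n' m' (a, b)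
        = (2:ℂ)⁻¹ * ((-1)^((n:ℕ)*(a:ℕ)) * (-1)^((n':ℕ)*(a:ℕ))) *
            ∑ b : Fin d, (if (b:ℕ) = f m (a:ℕ) then (1:ℂ) else 0) *
              (if (b:ℕ) = f m' (a:ℕ) then 1 else 0) := by
          rw [Finset.mul_sum]
          refine Finset.sum_congr rfl fun b _ => ?_
          simp only [phi, PiLp.toLp_apply, hf, map_mul, map_inv₀, Complex.conj_ofReal,
            map_pow, map_neg, map_one, apply_ite (starRingEnd ℂ), map_zero]
          rw [← h2]; ring
      _ = _ := by rw [sum_delta d _ _ (hflt m a)]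
  rw [Fintype.sum_prod_type]
  simp only [Matrix.conjTranspose_apply, Fmat, Matrix.of_apply]
  simp only [← starRingEnd_apply]
  rw [Fin.sum_univ_two, hsum 0, hsum 1]
  simp only [Fin.val_zero, Fin.val_one, mul_zero, mul_one, pow_zero]
  by_cases hm : m = m'
  · subst hm
    simp only [if_pos rfl, Prod.mk.injEq, and_true]
    by_cases hn : n = n'
    · subst hn
      rw [if_pos rfl]
      fin_cases n <;> norm_num
    · rw [if_neg hn]
      fin_cases n <;> fin_cases n' <;> simp_all
  · rw [if_neg (hne_aux d hd m m' hm 0 (by norm_num)),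
      if_neg (hne_aux d hd m m' hm 1 le_rfl),
      if_neg (fun h => hm (congrArg Prod.snd h))]
    simp
end
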